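/- For λ ∈ [−1,0), r ∈ (0,1), 0 < |α| < r^{1−λ}, with t := |α|/r^{1−λ} ∈ (0,1), the derivative dI_a/dr has the same sign as λ²(t^{2+2/λ}−1) − 2(1−λ)(t^{2+2/λ}+1)log r − 2(1−λ)λ² t^{2+2/λ} log t divided by (λ log|α|), and this quantity is positive; hence I_a is strictly increasing on the region {(r,α) : 0 < |α| < r^{1−λ}, 0 < r < 1}. -/

import Mathlib

/-!
Write `P = |α|² s^(2λ-2)`, `Q = |α|^(-2/λ) s^(2/λ-2)` and `t = |α| / s^(1-λ)`. Then
`P = t^(2+2/λ) Q`, and `t^(2+2/λ) ≥ 1` because `t < 1` and `2 + 2/λ ≤ 0` for `λ ∈ [-1, 0)`.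
Differentiating,
`λ log|α| · s · I_a'(s) = λ²(P - Q) - 2λ²(1-λ) P (log|α| + λ log s) - 2(1-λ) Q log s`,
where every term is nonnegative and the middle one positive since `log|α| + λ log s < log s < 0`;
as `λ log|α| > 0`, `I_a` is strictly increasing. The stated expression in `t` is positive
termwise by the same facts `t^(2+2/λ) ≥ 1` and `log r, log t < 0`.
-/

open Real

lemma two_add_two_div_nonpos {lam : ℝ} (hlam0 : -1 ≤ lam) (hlam1 : lam < 0) :
    2 + 2 / lam ≤ 0 := by
  have : 2 / lam ≤ -2 := by rw [div_le_iff_of_neg hlam1]; linarith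
  linarith

lemma one_le_rpow_two_add_two_div {lam t : ℝ} (hlam0 : -1 ≤ lam) (hlam1 : lam < 0)
    (ht0 : 0 < t) (ht1 : t ≤ 1) : 1 ≤ t ^ (2 + 2 / lam) :=
  one_le_rpow_of_pos_of_le_one_of_nonpos ht0 ht1 (two_add_two_div_nonpos hlam0 hlam1)

lemma rpow_two_add_two_div_mul_eq {lam A s : ℝ} (hlam : lam ≠ 0) (hA : 0 < A) (hs : 0 < s) :
    (A / s ^ (1 - lam)) ^ (2 + 2 / lam) * (A ^ (-2 / lam) * s ^ (2 / lam - 2)) =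
      A ^ (2 : ℝ) * s ^ (2 * lam - 2) := by
  rw [div_rpow hA.le (rpow_nonneg hs.le _), ← rpow_mul hs.le]
  calc _ = A ^ (2 + 2 / lam) * A ^ (-2 / lam) *
        (s ^ (2 / lam - 2) / s ^ ((1 - lam) * (2 + 2 / lam))) := by ring
    _ = _ := by
      rw [← rpow_add hA, ← rpow_sub hs]
      congr 2 <;> field_simp <;> ring

lemma hasDerivAt_rpow_mul_add_mul_log (c a b : ℝ) {x : ℝ} (hx : 0 < x) :
    HasDerivAt (fun y => y ^ c * (a + b * log y))
      (x ^ c * (c * (a + b * log x) + b) / x) x := by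
  have hpow := hasDerivAt_rpow_const (p := c) (Or.inl hx.ne')
  have hlog := ((hasDerivAt_log hx.ne').const_mul b).const_add a
  refine (hpow.mul hlog).congr_deriv ?_
  rw [rpow_sub hx, rpow_one]
  field_simp

lemma sign_numerator_pos {lam T L Lt : ℝ} (hlam : lam < 1) (hT : 1 ≤ T) (hL : L < 0)
    (hLt : Lt ≤ 0) :
    0 < lam ^ 2 * (T - 1) - 2 * (1 - lam) * (T + 1) * L - 2 * (1 - lam) * lam ^ 2 * T * Lt := by
  have h1 : 0 ≤ lam ^ 2 * (T - 1) := mul_nonneg (sq_nonneg lam) (by linarith)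
  have h2 : 0 < 2 * (1 - lam) * (T + 1) * -L :=
    mul_pos (mul_pos (by linarith) (by linarith)) (by linarith)
  have h3 : 0 ≤ 2 * (1 - lam) * lam ^ 2 * T * -Lt := by
    have : 0 ≤ 1 - lam := by linarith
    have : 0 ≤ T := by linarith
    have : 0 ≤ -Lt := by linarith
    positivity
  linarith

noncomputable def Ia (lam A s : ℝ) : ℝ :=
  1 + lam * A ^ 2 * s ^ (2 * lam - 2)
    + (1 / (2 * log A)) *
        (-2 * A ^ (-(2 : ℝ) / lam) * s ^ (2 / lam - 2) * log s
          + lam * A ^ (-(2 : ℝ) / lam) * s ^ (2 / lam - 2)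
          + 2 * lam ^ 2 * A ^ 2 * s ^ (2 * lam - 2) * log s
          - lam * A ^ 2 * s ^ (2 * lam - 2))

lemma Ia_hasDerivAt {lam A s : ℝ} (hlam : lam ≠ 0) (hA : log A ≠ 0) (hs : 0 < s) :
    HasDerivAt (Ia lam A)
      ((lam ^ 2 * (A ^ 2 * s ^ (2 * lam - 2) - A ^ (-2 / lam) * s ^ (2 / lam - 2))
        - 2 * lam ^ 2 * (1 - lam) * A ^ 2 * s ^ (2 * lam - 2) * (log A + lam * log s)
        - 2 * (1 - lam) * A ^ (-2 / lam) * s ^ (2 / lam - 2) * log s) / (lam * log A * s)) s := by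
  set M := log A
  have hform : Ia lam A = fun x => 1
      + A ^ 2 * (x ^ (2 * lam - 2) * ((lam - lam / (2 * M)) + lam ^ 2 / M * log x))
      + A ^ (-2 / lam) * (x ^ (2 / lam - 2) * (lam / (2 * M) + (-1 / M) * log x)) := by
    funext x
    simp only [Ia]
    ring
  rw [hform]
  refine ((((hasDerivAt_rpow_mul_add_mul_log _ _ _ hs).const_mul _).const_add _).add
    ((hasDerivAt_rpow_mul_add_mul_log _ _ _ hs).const_mul _)).congr_deriv ?_
  field_simp
  ring

lemma Ia_deriv_pos {lam A s : ℝ} (hlam0 : -1 ≤ lam) (hlam1 : lam < 0) (hA : 0 < A)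
    (hs0 : 0 < s) (hs1 : s < 1) (hAs : A < s ^ (1 - lam)) :
    0 < (lam ^ 2 * (A ^ 2 * s ^ (2 * lam - 2) - A ^ (-2 / lam) * s ^ (2 / lam - 2))
        - 2 * lam ^ 2 * (1 - lam) * A ^ 2 * s ^ (2 * lam - 2) * (log A + lam * log s)
        - 2 * (1 - lam) * A ^ (-2 / lam) * s ^ (2 / lam - 2) * log s) / (lam * log A * s) := by
  have hs1' : s ^ (1 - lam) < 1 := rpow_lt_one hs0.le hs1 (by linarith)
  have hlogs : log s < 0 := log_neg hs0 hs1
  have hlogA : log A < 0 := log_neg hA (hAs.trans hs1')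
  have hlogAs : log A + lam * log s < 0 := by
    have := log_lt_log hA hAs
    rw [log_rpow hs0] at this
    linarith
  set P := A ^ 2 * s ^ (2 * lam - 2)
  set Q := A ^ (-2 / lam) * s ^ (2 / lam - 2)
  have hQ : 0 < Q := by positivity
  have hQP : Q ≤ P := by
    have hT := one_le_rpow_two_add_two_div hlam0 hlam1 (t := A / s ^ (1 - lam))
      (by positivity) ((div_le_one (by positivity)).mpr hAs.le)
    have hPQ := rpow_two_add_two_div_mul_eq hlam1.ne hA hs0
    rw [rpow_two] at hPQ
    nlinarith
  apply div_pos _ (mul_pos (mul_pos_of_neg_of_neg hlam1 hlogA) hs0)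
  have h1 : 0 ≤ lam ^ 2 * (P - Q) := mul_nonneg (sq_nonneg lam) (by linarith)
  have h2 : 0 < 2 * lam ^ 2 * (1 - lam) * P * -(log A + lam * log s) := by
    have hlam2 : 0 < 2 * lam ^ 2 * (1 - lam) :=
      mul_pos (mul_pos two_pos (sq_pos_of_neg hlam1)) (by linarith)
    exact mul_pos (mul_pos hlam2 (hQ.trans_le hQP)) (by linarith)
  have h3 : 0 ≤ 2 * (1 - lam) * Q * -log s :=
    mul_nonneg (mul_nonneg (by linarith) hQ.le) (by linarith)
  linarith

lemma Ia_strictMonoOn {lam A r : ℝ} (hlam0 : -1 ≤ lam) (hlam1 : lam < 0) (hA : 0 < A)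
    (hr0 : 0 < r) (hr1 : r < 1) (hAr : A < r ^ (1 - lam)) :
    StrictMonoOn (Ia lam A) (Set.Ico r 1) := by
  have hlogA : log A ≠ 0 := (log_neg hA (hAr.trans (rpow_lt_one hr0.le hr1 (by linarith)))).ne
  refine strictMonoOn_of_deriv_pos (convex_Ico r 1) (fun x hx => ?_) (fun x hx => ?_)
  · exact (Ia_hasDerivAt hlam1.ne hlogA (hr0.trans_le hx.1)).continuousAt.continuousWithinAt
  · rw [interior_Ico] at hx
    have hx0 : 0 < x := hr0.trans hx.1
    rw [(Ia_hasDerivAt hlam1.ne hlogA hx0).deriv]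
    exact Ia_deriv_pos hlam0 hlam1 hA hx0 hx.2
      (hAr.trans_le (rpow_le_rpow hr0.le hx.1.le (by linarith)))

/-- For `λ ∈ [−1,0)`: with `t := |α|/r^{1−λ}`, the quantity
`(λ²(t^{2+2/λ}−1) − 2(1−λ)(t^{2+2/λ}+1)log r − 2(1−λ)λ² t^{2+2/λ} log t)/(λ log|α|)`
(which has the sign of `dI_a/dr`) is positive; hence the closed-form `I_a` is strictly
increasing in `r` on the region `0 < |α| < r^{1−λ}`, `0 < r < 1`. -/
theorem Ia_strict_mono
    (lam : ℝ) (hlam0 : -1 ≤ lam) (hlam1 : lam < 0)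
    (α : ℂ) (hα0 : 0 < ‖α‖) :
    let A : ℝ := ‖α‖
    let Ia : ℝ → ℝ := fun s =>
      1 + lam * A ^ 2 * s ^ (2 * lam - 2)
        + (1 / (2 * Real.log A)) *
            (-2 * A ^ (-(2 : ℝ) / lam) * s ^ (2 / lam - 2) * Real.log s
              + lam * A ^ (-(2 : ℝ) / lam) * s ^ (2 / lam - 2)
              + 2 * lam ^ 2 * A ^ 2 * s ^ (2 * lam - 2) * Real.log s
              - lam * A ^ 2 * s ^ (2 * lam - 2))
    (∀ r : ℝ, 0 < r → r < 1 → A < r ^ ((1 : ℝ) - lam) →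
      let t : ℝ := A / r ^ ((1 : ℝ) - lam)
      0 < (lam ^ 2 * (t ^ (2 + 2 / lam) - 1)
            - 2 * (1 - lam) * (t ^ (2 + 2 / lam) + 1) * Real.log r
            - 2 * (1 - lam) * lam ^ 2 * t ^ (2 + 2 / lam) * Real.log t)
          / (lam * Real.log A)) ∧
    (∀ r₁ r₂ : ℝ, 0 < r₁ → r₁ < r₂ → r₂ < 1 → A < r₁ ^ ((1 : ℝ) - lam) →
      Ia r₁ < Ia r₂) := by
  intro A _
  refine ⟨fun r hr0 hr1 hAr => ?_, fun r₁ r₂ hr₁ hr₁₂ hr₂ hAr₁ => ?_⟩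
  · have hr : 0 < r ^ (1 - lam) := by positivity
    have ht0 : 0 < A / r ^ (1 - lam) := div_pos hα0 hr
    have ht1 : A / r ^ (1 - lam) < 1 := (div_lt_one hr).mpr hAr
    have hA1 : A < 1 := hAr.trans (rpow_lt_one hr0.le hr1 (by linarith))
    exact div_pos
      (sign_numerator_pos (by linarith) (one_le_rpow_two_add_two_div hlam0 hlam1 ht0 ht1.le)
        (log_neg hr0 hr1) (log_neg ht0 ht1).le)
      (mul_pos_of_neg_of_neg hlam1 (log_neg hα0 hA1))
  · have hr₁1 : r₁ < 1 := hr₁₂.trans hr₂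
    exact Ia_strictMonoOn hlam0 hlam1 hα0 hr₁ hr₁1 hAr₁
      ⟨le_rfl, hr₁1⟩ ⟨hr₁₂.le, hr₂⟩ hr₁₂
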